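/- arXiv:0712.2227 — 3 statements merged into one kernel-verified Lean document; each statement's English description precedes it below -/
import Mathlib

section
/- Let G be a group, R a commutative ring, and M, N R[G]-modules. There is a bijection between H¹(G, Hom_R(M,N)) and the set of equivalence classes of extensions 0 → N → X → M → 0 of R[G]-modules that split as extensions of R-modules; the class of an extension with R-section s is the cocycle g ↦ (m ↦ α⁻¹(g·s(g⁻¹·m) − s(m))). -/
universe u

variable (R : Type u) [CommRing R] (G : Type u) [Group G]
variable (M : Type u) [AddCommGroup M] [Module R M] [DistribMulAction G M] [SMulCommClass G R M]
variable (N : Type u) [AddCommGroup N] [Module R N] [DistribMulAction G N] [SMulCommClass G R N]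

/-- An extension `0 → N → X → M → 0` of `R[G]`-modules that splits as an extension of
`R`-modules (the splitting `sec` is `R`-linear). -/
structure RGExt : Type (u + 1) where
  X : Type u
  [addX : AddCommGroup X]
  [modX : Module R X]
  [actX : DistribMulAction G X]
  [commX : SMulCommClass G R X]
  ι : N →ₗ[R] X
  π : X →ₗ[R] M
  ι_equivariant : ∀ (g : G) (a : N), ι (g • a) = g • ι a
  π_equivariant : ∀ (g : G) (x : X), π (g • x) = g • π x
  inj : Function.Injective ι
  exact : ∀ x, π x = 0 ↔ x ∈ LinearMap.range ι
  sec : M →ₗ[R] X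
  sec_section : ∀ m, π (sec m) = m

attribute [instance] RGExt.addX RGExt.modX RGExt.actX RGExt.commX

/-- Equivalence of extensions: an `R[G]`-isomorphism commuting with the structure maps. -/
def ExtEquiv (E₁ E₂ : RGExt R G M N) : Prop :=
  ∃ γ : E₁.X ≃ₗ[R] E₂.X, (∀ (g : G) (x : E₁.X), γ (g • x) = g • γ x) ∧
    (∀ a : N, γ (E₁.ι a) = E₂.ι a) ∧ (∀ x : E₁.X, E₂.π (γ x) = E₁.π x)

/-- The conjugation action of `G` on `Hom_R(M,N)`: `(g·f)(m) = g • f (g⁻¹ • m)`. -/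
def conjAct (g : G) (f : M →ₗ[R] N) : M →ₗ[R] N where
  toFun m := g • f (g⁻¹ • m)
  map_add' m₁ m₂ := by simp [smul_add]
  map_smul' r m := by
    simp only [RingHom.id_apply]
    rw [smul_comm (g⁻¹) r m, map_smul, smul_comm]

/-- One-cocycles of `G` with values in `Hom_R(M,N)`. -/
def IsCocycle (c : G → (M →ₗ[R] N)) : Prop :=
  ∀ g h : G, c (g * h) = c g + conjAct R G M N g (c h)

/-- Cohomologous cocycles: they differ by a coboundary `g ↦ g·f − f`. -/
def CohEquiv (c c' : {c : G → (M →ₗ[R] N) // IsCocycle R G M N c}) : Prop :=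
  ∃ f : M →ₗ[R] N, ∀ g : G, c.1 g - c'.1 g = conjAct R G M N g f - f

/-!
An `R`-linear section `s` of `π` splits `X ≅ N × M` as `R`-modules; let `ρ : X → N` be the
retraction with `ι ∘ ρ = id - s ∘ π`. Since `π` is equivariant, it kills `g • s (g⁻¹ • ·) - s`,
so `c g := ρ ∘ (g • s (g⁻¹ • ·) - s)` satisfies `ι ∘ c g = g • s (g⁻¹ • ·) - s`, and `c` is a
cocycle because `f ↦ g • f (g⁻¹ • ·)` is an action. Transported to `M × N`, the action on `X`
reads `g • (m, n) = (g • m, g • n + c g (g • m))`; conversely this formula defines an extension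
for every cocycle `c`, and its cocycle is `c`. An equivalence `γ` of extensions changes the
cocycle by the coboundary of `ρ ∘ (γ ∘ s₁ - s₂)`, and the coboundary of `f` is absorbed by the
shear `(m, n) ↦ (m, n + f m)`.
-/

variable {R G M N}

@[simp]
lemma conjAct_apply (g : G) (f : M →ₗ[R] N) (m : M) :
    conjAct R G M N g f m = g • f (g⁻¹ • m) := rfl

lemma conjAct_apply_smul (g : G) (f : M →ₗ[R] N) (m : M) :
    conjAct R G M N g f (g • m) = g • f m := by
  simp

@[simp]
lemma conjAct_one (f : M →ₗ[R] N) : conjAct R G M N 1 f = f := by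
  ext; simp

lemma conjAct_mul (g h : G) (f : M →ₗ[R] N) :
    conjAct R G M N (g * h) f = conjAct R G M N g (conjAct R G M N h f) := by
  ext; simp [mul_smul]

lemma conjAct_sub (g : G) (f f' : M →ₗ[R] N) :
    conjAct R G M N g (f - f') = conjAct R G M N g f - conjAct R G M N g f' := by
  ext; simp [smul_sub]

lemma comp_conjAct {P : Type u} [AddCommGroup P] [Module R P] [DistribMulAction G P]
    [SMulCommClass G R P] (φ : N →ₗ[R] P) (hφ : ∀ (g : G) (a : N), φ (g • a) = g • φ a)
    (g : G) (f : M →ₗ[R] N) :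
    φ ∘ₗ conjAct R G M N g f = conjAct R G M P g (φ ∘ₗ f) := by
  ext; simp [hφ]

@[simp]
lemma conjAct_id (g : G) : conjAct R G M M g LinearMap.id = LinearMap.id := by
  ext; simp

lemma IsCocycle.map_one {c : G → (M →ₗ[R] N)} (hc : IsCocycle R G M N c) : c 1 = 0 := by
  simpa using hc 1 1

namespace RGExt

section splitting

omit [SMulCommClass G R M] [SMulCommClass G R N]

variable (E : RGExt R G M N)

@[simp]
lemma π_ι (a : N) : E.π (E.ι a) = 0 := (E.exact _).2 ⟨a, rfl⟩

lemma π_comp_sec : E.π ∘ₗ E.sec = LinearMap.id := LinearMap.ext E.sec_section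

lemma exact_ι_π : Function.Exact E.ι E.π := E.exact

noncomputable def splitting : (N × M) ≃ₗ[R] E.X :=
  (E.exact_ι_π.splitSurjectiveEquiv E.inj ⟨E.sec, E.π_comp_sec⟩).1.symm

lemma splitting_apply (p : N × M) : E.splitting p = E.ι p.1 + E.sec p.2 := rfl

noncomputable def retraction : E.X →ₗ[R] N := LinearMap.fst R N M ∘ₗ E.splitting.symm.toLinearMap

lemma retraction_splitting (p : N × M) : E.retraction (E.splitting p) = p.1 := by
  simp [retraction]

lemma ι_retraction (x : E.X) : E.ι (E.retraction x) = x - E.sec (E.π x) := by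
  obtain ⟨p, rfl⟩ := E.splitting.surjective x
  rw [retraction_splitting, splitting_apply, map_add, π_ι, sec_section, zero_add,
    add_sub_cancel_right]

lemma ι_comp_retraction_comp {P : Type*} [AddCommGroup P] [Module R P] (φ : P →ₗ[R] E.X)
    (hφ : E.π ∘ₗ φ = 0) : E.ι ∘ₗ E.retraction ∘ₗ φ = φ := by
  ext p
  have hp : E.π (φ p) = 0 := LinearMap.congr_fun hφ p
  simp [ι_retraction, hp]

end splitting

variable (E : RGExt R G M N)

noncomputable def cocycleFun (g : G) : M →ₗ[R] N :=
  E.retraction ∘ₗ (conjAct R G M E.X g E.sec - E.sec)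

omit [SMulCommClass G R N] in
lemma ι_comp_cocycleFun (g : G) :
    E.ι ∘ₗ E.cocycleFun g = conjAct R G M E.X g E.sec - E.sec := by
  refine E.ι_comp_retraction_comp _ ?_
  rw [LinearMap.comp_sub, comp_conjAct E.π E.π_equivariant, π_comp_sec, conjAct_id, sub_self]

lemma isCocycle_cocycleFun : IsCocycle R G M N E.cocycleFun := by
  intro g h
  rw [← LinearMap.cancel_left E.inj, LinearMap.comp_add, comp_conjAct E.ι E.ι_equivariant,
    ι_comp_cocycleFun, ι_comp_cocycleFun, ι_comp_cocycleFun, conjAct_mul, conjAct_sub]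
  abel

noncomputable def cocycle : {c : G → (M →ₗ[R] N) // IsCocycle R G M N c} :=
  ⟨E.cocycleFun, E.isCocycle_cocycleFun⟩

lemma ι_cocycle_apply (g : G) (m : M) :
    E.ι (E.cocycle.1 g m) = g • E.sec (g⁻¹ • m) - E.sec m :=
  LinearMap.congr_fun (E.ι_comp_cocycleFun g) m

lemma cocycle_eq_of_ι_apply (c : {c : G → (M →ₗ[R] N) // IsCocycle R G M N c})
    (hc : ∀ (g : G) (m : M), E.ι (c.1 g m) = g • E.sec (g⁻¹ • m) - E.sec m) :
    E.cocycle = c := by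
  refine Subtype.ext (funext fun g => LinearMap.ext fun m => E.inj ?_)
  rw [ι_cocycle_apply, hc]

end RGExt

lemma ExtEquiv.cohEquiv_cocycle {E₁ E₂ : RGExt R G M N} (h : ExtEquiv R G M N E₁ E₂) :
    CohEquiv R G M N E₁.cocycle E₂.cocycle := by
  obtain ⟨γ, hγ, hι, hπ⟩ := h
  set δ : M →ₗ[R] E₂.X := γ.toLinearMap ∘ₗ E₁.sec - E₂.sec
  have hδ : E₂.π ∘ₗ δ = 0 := by
    ext m
    simp [δ, hπ, RGExt.sec_section]
  have hγι : γ.toLinearMap ∘ₗ E₁.ι = E₂.ι := LinearMap.ext hι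
  refine ⟨E₂.retraction ∘ₗ δ, fun g => (LinearMap.cancel_left E₂.inj).1 ?_⟩
  calc E₂.ι ∘ₗ (E₁.cocycle.1 g - E₂.cocycle.1 g)
      = γ.toLinearMap ∘ₗ (E₁.ι ∘ₗ E₁.cocycleFun g) - E₂.ι ∘ₗ E₂.cocycleFun g := by
        rw [LinearMap.comp_sub, ← hγι, LinearMap.comp_assoc]; rfl
    _ = conjAct R G M E₂.X g δ - δ := by
        rw [RGExt.ι_comp_cocycleFun, RGExt.ι_comp_cocycleFun, LinearMap.comp_sub,
          comp_conjAct _ hγ]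
        simp only [δ, conjAct_sub]
        abel
    _ = E₂.ι ∘ₗ (conjAct R G M N g (E₂.retraction ∘ₗ δ) - E₂.retraction ∘ₗ δ) := by
        rw [LinearMap.comp_sub, comp_conjAct E₂.ι E₂.ι_equivariant,
          E₂.ι_comp_retraction_comp δ hδ]

def TwistedProd (_c : {c : G → (M →ₗ[R] N) // IsCocycle R G M N c}) : Type u := M × N

namespace TwistedProd

variable (c : {c : G → (M →ₗ[R] N) // IsCocycle R G M N c})

instance : AddCommGroup (TwistedProd c) := inferInstanceAs (AddCommGroup (M × N))
instance : Module R (TwistedProd c) := inferInstanceAs (Module R (M × N))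

def toProd : TwistedProd c ≃ₗ[R] M × N := LinearEquiv.refl R (M × N)

instance : SMul G (TwistedProd c) :=
  ⟨fun g p =>
    (toProd c).symm (g • (toProd c p).1, g • (toProd c p).2 + c.1 g (g • (toProd c p).1))⟩

variable {c}

@[simp]
lemma toProd_smul (g : G) (p : TwistedProd c) :
    toProd c (g • p) = (g • (toProd c p).1, g • (toProd c p).2 + c.1 g (g • (toProd c p).1)) :=
  rfl

@[ext]
lemma ext {p q : TwistedProd c} (h : toProd c p = toProd c q) : p = q := (toProd c).injective h

instance : DistribMulAction G (TwistedProd c) where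
  one_smul p := by ext <;> simp [c.2.map_one]
  mul_smul g h p := by
    ext
    · simp [mul_smul]
    · simp [c.2 g h, mul_smul, smul_add]
      abel
  smul_zero g := by ext <;> simp
  smul_add g p q := by ext <;> simp [smul_add, add_add_add_comm]

instance : SMulCommClass G R (TwistedProd c) where
  smul_comm g r p := by ext <;> simp [smul_comm g r, smul_add]

end TwistedProd

namespace RGExt

open TwistedProd

variable (c : {c : G → (M →ₗ[R] N) // IsCocycle R G M N c})

def ofCocycle : RGExt R G M N where
  X := TwistedProd c
  ι := (toProd c).symm.toLinearMap ∘ₗ LinearMap.inr R M N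
  π := LinearMap.fst R M N ∘ₗ (toProd c).toLinearMap
  ι_equivariant g a := by ext <;> simp
  π_equivariant g x := rfl
  inj := (toProd c).symm.injective.comp LinearMap.inr_injective
  exact x := by
    refine ⟨fun hx => ⟨(toProd c x).2, ?_⟩, ?_⟩
    · ext
      · simpa using hx.symm
      · simp
    · rintro ⟨a, rfl⟩
      simp
  sec := (toProd c).symm.toLinearMap ∘ₗ LinearMap.inl R M N
  sec_section m := by simp

lemma cocycle_ofCocycle : (ofCocycle c).cocycle = c := by
  refine cocycle_eq_of_ι_apply _ c fun g m => ?_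
  change (toProd c).symm (0, c.1 g m) =
    g • (toProd c).symm (g⁻¹ • m, 0) - (toProd c).symm (m, 0)
  ext <;> simp [← mul_smul]

lemma ofCocycle_cocycle (E : RGExt R G M N) : ExtEquiv R G M N (ofCocycle E.cocycle) E := by
  let γ : TwistedProd E.cocycle ≃ₗ[R] E.X :=
    (toProd _).trans ((LinearEquiv.prodComm R M N).trans E.splitting)
  have hγ (p : TwistedProd E.cocycle) : γ p = E.ι (toProd _ p).2 + E.sec (toProd _ p).1 := rfl
  refine ⟨γ, fun g (p : TwistedProd E.cocycle) => ?_, fun a => ?_,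
    fun (p : TwistedProd E.cocycle) => ?_⟩
  · change γ (g • p) = g • γ p
    rw [hγ, hγ, toProd_smul, map_add, E.ι_equivariant, ι_cocycle_apply, inv_smul_smul, smul_add]
    abel
  · change γ ((toProd _).symm (0, a)) = E.ι a
    simp [hγ]
  · change E.π (γ p) = (toProd _ p).1
    simp [hγ, sec_section]

lemma ofCocycle_congr {c c' : {c : G → (M →ₗ[R] N) // IsCocycle R G M N c}}
    (h : CohEquiv R G M N c c') : ExtEquiv R G M N (ofCocycle c) (ofCocycle c') := by
  obtain ⟨f, hf⟩ := h
  let γ : TwistedProd c ≃ₗ[R] TwistedProd c' :=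
    (toProd c).trans (((LinearEquiv.refl R M).skewProd (LinearEquiv.refl R N) f).trans
      (toProd c').symm)
  have hγ (p : TwistedProd c) :
      toProd c' (γ p) = ((toProd c p).1, (toProd c p).2 + f (toProd c p).1) := rfl
  refine ⟨γ, fun g (p : TwistedProd c) => ?_, fun a => ?_, fun _ => rfl⟩
  · change γ (g • p) = g • γ p
    have key := LinearMap.congr_fun (hf g) (g • (toProd c p).1)
    simp only [LinearMap.sub_apply, conjAct_apply_smul, sub_eq_sub_iff_add_eq_add] at key
    ext
    · simp [hγ]
    · simp only [hγ, toProd_smul, smul_add]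
      rw [add_assoc, key, add_assoc]
  · change γ ((toProd c).symm (0, a)) = (toProd c').symm (0, a)
    ext <;> simp [hγ]

end RGExt

/-- There is a bijection between `H¹(G, Hom_R(M,N))` and the set of equivalence classes of
extensions `0 → N → X → M → 0` of `R[G]`-modules that split as extensions of `R`-modules;
the class of an extension with `R`-section `s` is the cocycle
`g ↦ (m ↦ ι⁻¹(g • s(g⁻¹ • m) − s(m)))`. -/
theorem stmt_7 :
    ∃ e : Quot (ExtEquiv R G M N) ≃ Quot (CohEquiv R G M N),
      ∀ (E : RGExt R G M N) (c : {c : G → (M →ₗ[R] N) // IsCocycle R G M N c}),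
        (∀ (g : G) (m : M), E.ι (c.1 g m) = g • E.sec (g⁻¹ • m) - E.sec m) →
          e (Quot.mk _ E) = Quot.mk _ c := by
  refine ⟨⟨Quot.lift (fun E => Quot.mk _ E.cocycle) fun _ _ h => Quot.sound h.cohEquiv_cocycle,
    Quot.lift (fun c => Quot.mk _ (RGExt.ofCocycle c))
      fun _ _ h => Quot.sound (RGExt.ofCocycle_congr h), ?_, ?_⟩, ?_⟩
  · rintro ⟨E⟩
    exact Quot.sound (RGExt.ofCocycle_cocycle E)
  · rintro ⟨c⟩
    exact congrArg (Quot.mk _) (RGExt.cocycle_ofCocycle c)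
  · intro E c hc
    exact congrArg (Quot.mk _) (E.cocycle_eq_of_ι_apply c hc)
end

section
/- Let 𝒪 be a discrete valuation ring with uniformizer ϖ and T a commutative 𝒪-algebra acting on a module with distinguished eigenvector F₀ having ϖ-integral structure. Suppose G = ∑_j c_j F_j is an 𝒪-linear combination of elements F_j, that G ≡ 0 mod ϖ^{M−r} (for r < M), and F₀ ≡ G mod ϖ^M with some coefficient of F₀ a ϖ-unit. Then a contradiction follows: F₀ ≡ 0 mod ϖ is impossible. Hence r ≥ M. -/
theorem dvd_of_pow_dvd_of_pow_dvd_sub {R : Type*} [CommRing R] {p f g : R} {k n : ℕ}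
    (hk : k ≠ 0) (hn : n ≠ 0) (hg : p ^ k ∣ g) (hfg : p ^ n ∣ f - g) : p ∣ f := by
  have hp_g : p ∣ g := (dvd_pow_self p hk).trans hg
  have hp_fg : p ∣ f - g := (dvd_pow_self p hn).trans hfg
  simpa using dvd_add hp_fg hp_g

theorem stmt_13_general {𝒪 : Type*} [CommRing 𝒪]
    (ϖ : 𝒪) (hϖ : Irreducible ϖ) {ι : Type*} (r M : ℕ)
    (F₀ : ι → 𝒪) (G : ι → 𝒪)
    (hGcong : ∀ T, ϖ ^ (M - r) ∣ G T)
    (hF₀cong : ∀ T, ϖ ^ M ∣ (F₀ T - G T))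
    (hunit : ∃ T, IsUnit (F₀ T)) :
    M ≤ r := by
  by_contra! hrM
  obtain ⟨T, hT⟩ := hunit
  have hϖF₀ : ϖ ∣ F₀ T :=
    dvd_of_pow_dvd_of_pow_dvd_sub (by omega) (by omega) (hGcong T) (hF₀cong T)
  exact hϖ.not_isUnit (isUnit_of_dvd_unit hϖF₀ hT)

/-- Abstract CAP-ideal bound: over a DVR `𝒪` with uniformizer `ϖ`, suppose
`G = ∑_j c_j F_j` (coefficientwise), `G ≡ 0 mod ϖ^{M−r}`, `F₀ ≡ G mod ϖ^M`, and some
coefficient of `F₀` is a `ϖ`-unit.  Then `F₀ ≡ 0 mod ϖ` is impossible, hence `r ≥ M`. -/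
theorem stmt_13 {𝒪 : Type*} [CommRing 𝒪] [IsDomain 𝒪] [IsDiscreteValuationRing 𝒪]
    (ϖ : 𝒪) (hϖ : Irreducible ϖ) {ι : Type*} (r M : ℕ) {m : ℕ}
    (F₀ : ι → 𝒪) (F : Fin m → ι → 𝒪) (c : Fin m → 𝒪) (G : ι → 𝒪)
    (hG : G = fun T => ∑ j, c j * F j T)
    (hGcong : ∀ T, ϖ ^ (M - r) ∣ G T)
    (hF₀cong : ∀ T, ϖ ^ M ∣ (F₀ T - G T))
    (hunit : ∃ T, IsUnit (F₀ T)) :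
    M ≤ r :=
  stmt_13_general ϖ hϖ r M F₀ G hGcong hF₀cong hunit
end

section
/- Let ψ : M_{2n,4n}(R) → M_{2n,2n}(R) be the map extracting blocks: ψ sends the block matrix (a₁₁ a₁₂ b₁₁ b₁₂; c₁₁ c₁₂ d₁₁ d₁₂) (blocks of size n×n) to (a₁₁ b₁₁; c₁₁ d₁₁). Then for g ∈ GL_{2n}(R) and the embedding ι(g₁,g₂) of Sp_{2n}×Sp_{2n} into Sp_{4n}, one has ψ(g · X · ι(g₁,g₂)) = g · ψ(X · ι(1,g₂)) · g₁ whenever X = (0_{2n} 1_{2n})·τ for τ with appropriate block structure; in particular ψ(g·(0 1)·τᵢ·ι(g₁,g₂)) = g·ψ((0 1)·τᵢ)·g₁. -/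
open Matrix

variable (R : Type*) [CommRing R] (n : ℕ)

/-- The standard symplectic form matrix. -/
def Jmat (m : Type*) [DecidableEq m] : Matrix (m ⊕ m) (m ⊕ m) R :=
  Matrix.fromBlocks 0 (-1) 1 0

/-- Membership in the symplectic group. -/
def IsSymplectic {m : Type*} [Fintype m] [DecidableEq m]
    (g : Matrix (m ⊕ m) (m ⊕ m) R) : Prop :=
  g.transpose * Jmat R m * g = Jmat R m

/-- The interleaved embedding `ι : Sp_{2n} × Sp_{2n} → Sp_{4n}`. -/
def iotaEmb (g₁ g₂ : Matrix (Fin n ⊕ Fin n) (Fin n ⊕ Fin n) R) :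
    Matrix ((Fin n ⊕ Fin n) ⊕ (Fin n ⊕ Fin n)) ((Fin n ⊕ Fin n) ⊕ (Fin n ⊕ Fin n)) R :=
  Matrix.fromBlocks
    (Matrix.fromBlocks g₁.toBlocks₁₁ 0 0 g₂.toBlocks₁₁)
    (Matrix.fromBlocks g₁.toBlocks₁₂ 0 0 g₂.toBlocks₁₂)
    (Matrix.fromBlocks g₁.toBlocks₂₁ 0 0 g₂.toBlocks₂₁)
    (Matrix.fromBlocks g₁.toBlocks₂₂ 0 0 g₂.toBlocks₂₂)

/-- The block-extraction map `ψ : M_{2n,4n} → M_{2n,2n}`, extracting the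
`(1,1), (1,3), (3,1), (3,3)` blocks. -/
def psiMap (X : Matrix (Fin n ⊕ Fin n) ((Fin n ⊕ Fin n) ⊕ (Fin n ⊕ Fin n)) R) :
    Matrix (Fin n ⊕ Fin n) (Fin n ⊕ Fin n) R :=
  X.submatrix id (Sum.map Sum.inl Sum.inl)

/-- The `2n × 4n` matrix `(0_{2n} 1_{2n})`. -/
def onezero : Matrix (Fin n ⊕ Fin n) ((Fin n ⊕ Fin n) ⊕ (Fin n ⊕ Fin n)) R :=
  Matrix.of fun i j => if j = Sum.inr i then 1 else 0

lemma psi_mul_left (g : Matrix (Fin n ⊕ Fin n) (Fin n ⊕ Fin n) R)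
    (X : Matrix (Fin n ⊕ Fin n) ((Fin n ⊕ Fin n) ⊕ (Fin n ⊕ Fin n)) R) :
    psiMap R n (g * X) = g * psiMap R n X := by
  ext i j
  simp [psiMap, Matrix.mul_apply]

lemma psi_mul_iota (X : Matrix (Fin n ⊕ Fin n) ((Fin n ⊕ Fin n) ⊕ (Fin n ⊕ Fin n)) R)
    (g₁ g₂ : Matrix (Fin n ⊕ Fin n) (Fin n ⊕ Fin n) R) :
    psiMap R n (X * iotaEmb R n g₁ g₂) = psiMap R n X * g₁ := by
  ext i j
  cases j with
  | inl a =>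
    simp [psiMap, iotaEmb, Matrix.mul_apply, Fintype.sum_sum_type,
      Matrix.toBlocks₁₁, Matrix.toBlocks₂₁, Matrix.toBlocks₁₂, Matrix.toBlocks₂₂]
  | inr a =>
    simp [psiMap, iotaEmb, Matrix.mul_apply, Fintype.sum_sum_type,
      Matrix.toBlocks₁₁, Matrix.toBlocks₂₁, Matrix.toBlocks₁₂, Matrix.toBlocks₂₂]

/-- The intertwining property of `ψ`: for `g ∈ GL_{2n}(R)`, `g₁, g₂ ∈ Sp_{2n}(R)` and
`X = (0 1)·τ`, one has `ψ(g·X·ι(g₁,g₂)) = g·ψ(X·ι(1,g₂))·g₁`; in particular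
`ψ(g·(0 1)·τ·ι(g₁,g₂)) = g·ψ((0 1)·τ)·g₁`. -/
theorem stmt_17 (g : Matrix (Fin n ⊕ Fin n) (Fin n ⊕ Fin n) R) (hg : IsUnit g.det)
    (g₁ g₂ : Matrix (Fin n ⊕ Fin n) (Fin n ⊕ Fin n) R)
    (hg₁ : IsSymplectic R g₁) (hg₂ : IsSymplectic R g₂)
    (τ : Matrix ((Fin n ⊕ Fin n) ⊕ (Fin n ⊕ Fin n)) ((Fin n ⊕ Fin n) ⊕ (Fin n ⊕ Fin n)) R) :
    psiMap R n (g * (onezero R n * τ) * iotaEmb R n g₁ g₂) =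
      g * psiMap R n ((onezero R n * τ) * iotaEmb R n 1 g₂) * g₁ ∧
    psiMap R n (g * (onezero R n * τ) * iotaEmb R n g₁ g₂) =
      g * psiMap R n (onezero R n * τ) * g₁ := by
  constructor <;>
  · rw [mul_assoc, psi_mul_iota, psi_mul_left]
    simp [psi_mul_iota, mul_assoc]
end
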